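/- arXiv:2001.11622 — 4 statements merged into one kernel-verified Lean document; each statement's English description precedes it below -/
import Mathlib

section
/- In Z_p with δ(x) = (x - x^p)/p, the k-th iterate δ^k(p^k) is a p-adic unit, i.e., v_p(δ^k(p^k)) = 0. -/
/-!
On the open unit disc of an ultrametric ring `‖x ^ p‖ < ‖x‖`, so `‖x - x ^ p‖ = ‖x‖` and hence
`‖δ x‖ = p * ‖x‖`: each application of `δ` raises the norm by a factor `p` (lowers the valuation
by one) as long as the norm stays below `1`. Starting from `‖p ^ k‖ = p ^ (-k)`, after `k` steps
the norm is exactly `1`.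
-/

section Ultrametric

variable {R : Type*} [NormedRing R] [IsUltrametricDist R]

theorem norm_sub_pow_eq_norm_of_norm_lt_one {x : R} (hx : ‖x‖ < 1) {n : ℕ} (hn : 2 ≤ n) :
    ‖x - x ^ n‖ = ‖x‖ := by
  rcases eq_or_ne x 0 with rfl | hx0
  · simp [zero_pow (by omega : n ≠ 0)]
  have hlt : ‖x ^ n‖ < ‖x‖ :=
    calc ‖x ^ n‖ ≤ ‖x‖ ^ n := norm_pow_le' x (by omega)
      _ < ‖x‖ := pow_lt_self_of_lt_one₀ (norm_pos_iff.2 hx0) hx (by omega)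
  have hne : ‖x‖ ≠ ‖-x ^ n‖ := by rw [norm_neg]; exact hlt.ne'
  rw [sub_eq_add_neg, IsUltrametricDist.norm_add_eq_max_of_norm_ne_norm hne, norm_neg,
    max_eq_left hlt.le]

end Ultrametric

namespace PadicInt

variable {p : ℕ} [Fact p.Prime]

theorem valuation_eq_zero_of_norm_eq_one {x : ℤ_[p]} (hx : ‖x‖ = 1) : x.valuation = 0 := by
  have hx0 : x ≠ 0 := by rintro rfl; simp at hx
  have hp : (1 : ℝ) < p := mod_cast (Fact.out : p.Prime).one_lt
  rw [norm_eq_zpow_neg_valuation hx0] at hx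
  simpa using (zpow_eq_one_iff_right₀ (by positivity) hp.ne').1 hx

variable {D : ℤ_[p] → ℤ_[p]} (hD : ∀ x, (p : ℤ_[p]) * D x = x - x ^ p)
include hD

theorem norm_delta_of_norm_lt_one {x : ℤ_[p]} (hx : ‖x‖ < 1) : ‖D x‖ = p * ‖x‖ := by
  have h := congrArg norm (hD x)
  rw [norm_mul, norm_p, norm_sub_pow_eq_norm_of_norm_lt_one hx (Fact.out : p.Prime).two_le] at h
  have hp : (p : ℝ) ≠ 0 := mod_cast (Fact.out : p.Prime).ne_zero
  rw [← h]
  field_simp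

theorem norm_iterate_delta (j : ℕ) {x : ℤ_[p]} (hx : (p : ℝ) ^ j * ‖x‖ ≤ 1) :
    ‖D^[j] x‖ = p ^ j * ‖x‖ := by
  induction j generalizing x with
  | zero => simp
  | succ j ih =>
    have hx1 : ‖x‖ < 1 := by
      have hpj : 1 < (p : ℝ) ^ (j + 1) :=
        one_lt_pow₀ (mod_cast (Fact.out : p.Prime).one_lt) (by omega)
      by_contra! h
      nlinarith
    have hDx := norm_delta_of_norm_lt_one hD hx1
    rw [Function.iterate_succ_apply, ih (by rwa [hDx, ← mul_assoc, ← pow_succ]), hDx,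
      ← mul_assoc, ← pow_succ]

end PadicInt

/-- In `ℤ_p` with `δ x = (x - x^p)/p`, the `k`-th iterate `δ^[k] (p^k)` is a
`p`-adic unit, i.e. has valuation `0`. -/
theorem stmt1 (p : ℕ) [Fact p.Prime] (D : ℤ_[p] → ℤ_[p])
    (hD : ∀ x, (p : ℤ_[p]) * D x = x - x ^ p) (k : ℕ) :
    (D^[k] ((p : ℤ_[p]) ^ k)).valuation = 0 := by
  have hp : (p : ℝ) ≠ 0 := mod_cast (Fact.out : p.Prime).ne_zero
  have hpk : (p : ℝ) ^ k * ‖(p : ℤ_[p]) ^ k‖ = 1 := by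
    rw [PadicInt.norm_p_pow, zpow_neg, zpow_natCast, mul_inv_cancel₀ (pow_ne_zero k hp)]
  apply PadicInt.valuation_eq_zero_of_norm_eq_one
  rw [PadicInt.norm_iterate_delta hD k hpk.le, hpk]
end

section
/- Let R be a δ-ring and x, y ∈ R with xy = p^k. Then for every i ≥ 1, δ^i(p^k) lies in the ideal (φ^i(x)·δ^i(y), δ^{i-1}(y), …, δ(y), y). -/
/-- A δ-ring structure at the prime `p` on a commutative ring `R`. -/
structure DeltaRing (p : ℕ) (R : Type*) [CommRing R] where
  δ : R → R
  delta_one : δ 1 = 0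
  delta_mul : ∀ a b, δ (a * b) = a ^ p * δ b + b ^ p * δ a + (p : R) * δ a * δ b
  delta_add : ∀ a b, δ (a + b) = δ a + δ b -
    ∑ i ∈ Finset.Ioo 0 p, ((p.choose i / p : ℕ) : R) * a ^ i * b ^ (p - i)

/-!
Write `J n = iterateSpan y n` for the ideal generated by `y, δ y, …, δ^{n-1} y`. By induction
on `n`, `δ^n(x y) ≡ φ^n(x) δ^n(y) mod J n`: writing `δ^n(x y) = a + z` with
`a = φ^n(x) δ^n(y)` and `z ∈ J n`, the additivity defect of `δ` on `a + z` is divisible by `z`,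
`δ z ∈ J (n + 1)` because `δ` maps the ideal generated by a set `S` into any ideal containing
`S` and `δ S`, and `δ a = φ^{n+1}(x) δ^{n+1}(y) + (δ^n y)^p δ(φ^n x)`.
-/

namespace DeltaRing

variable {p : ℕ} {R : Type*} [CommRing R] (dr : DeltaRing p R)

def frob (a : R) : R := a ^ p + (p : R) * dr.δ a

theorem delta_add_sub_mem {I : Ideal R} (a : R) {z : R} (hz : z ∈ I) :
    dr.δ (a + z) - (dr.δ a + dr.δ z) ∈ I := by
  rw [dr.delta_add, sub_sub_cancel_left, neg_mem_iff]
  refine Ideal.sum_mem _ fun j hj => Ideal.mul_mem_left _ _ (Ideal.pow_mem_of_mem _ hz _ ?_)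
  have := (Finset.mem_Ioo.mp hj).2
  omega

theorem delta_zero : dr.δ 0 = 0 := by
  simpa using dr.delta_add_sub_mem (I := ⊥) 0 (Submodule.zero_mem _)

theorem delta_mul_eq_frob_mul (a b : R) :
    dr.δ (a * b) = dr.frob a * dr.δ b + b ^ p * dr.δ a := by
  rw [dr.delta_mul, frob]
  ring

theorem delta_mem_of_mem_span (hp : 0 < p) {S : Set R} {I : Ideal R} (hS : S ⊆ I)
    (hδS : ∀ s ∈ S, dr.δ s ∈ I) {z : R} (hz : z ∈ Ideal.span S) : dr.δ z ∈ I := by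
  have hle : Ideal.span S ≤ I := Ideal.span_le.mpr hS
  induction hz using Submodule.span_induction with
  | mem s hs => exact hδS s hs
  | zero => simpa only [dr.delta_zero] using I.zero_mem
  | add a b _ hb hδa hδb =>
    rw [← sub_add_cancel (dr.δ (a + b)) (dr.δ a + dr.δ b)]
    exact I.add_mem (dr.delta_add_sub_mem a (hle hb)) (I.add_mem hδa hδb)
  | smul r z hz hδz =>
    rw [smul_eq_mul, dr.delta_mul]
    refine I.add_mem (I.add_mem (I.mul_mem_left _ hδz) ?_) (I.mul_mem_left _ hδz)
    exact I.mul_mem_right _ (I.pow_mem_of_mem (hle hz) p hp)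

def iterateSpan (y : R) (n : ℕ) : Ideal R := Ideal.span ((fun j => dr.δ^[j] y) '' Set.Iio n)

theorem iterate_mem_iterateSpan (y : R) {j n : ℕ} (h : j < n) :
    dr.δ^[j] y ∈ dr.iterateSpan y n :=
  Ideal.subset_span ⟨j, h, rfl⟩

theorem iterateSpan_mono (y : R) {m n : ℕ} (h : m ≤ n) :
    dr.iterateSpan y m ≤ dr.iterateSpan y n :=
  Ideal.span_mono (Set.image_mono fun _ hj => lt_of_lt_of_le hj h)

theorem delta_mem_iterateSpan_succ (hp : 0 < p) (y : R) {n : ℕ} {z : R}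
    (hz : z ∈ dr.iterateSpan y n) : dr.δ z ∈ dr.iterateSpan y (n + 1) := by
  refine dr.delta_mem_of_mem_span hp ?_ ?_ hz
  · rintro _ ⟨j, hj, rfl⟩
    exact dr.iterate_mem_iterateSpan y (Nat.lt_succ_of_lt hj)
  · rintro _ ⟨j, hj, rfl⟩
    rw [← Function.iterate_succ_apply' dr.δ]
    exact dr.iterate_mem_iterateSpan y (Nat.succ_lt_succ hj)

theorem iterate_delta_mul_sub_mem (hp : 0 < p) (x y : R) (n : ℕ) :
    dr.δ^[n] (x * y) - dr.frob^[n] x * dr.δ^[n] y ∈ dr.iterateSpan y n := by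
  induction n with
  | zero => simp
  | succ n ih =>
    set a := dr.frob^[n] x * dr.δ^[n] y
    set z := dr.δ^[n] (x * y) - a
    have hsplit : dr.δ^[n + 1] (x * y) = dr.δ (a + z) := by
      rw [Function.iterate_succ_apply', add_sub_cancel]
    have hδa : dr.δ a =
        dr.frob^[n + 1] x * dr.δ^[n + 1] y + (dr.δ^[n] y) ^ p * dr.δ (dr.frob^[n] x) := by
      rw [dr.delta_mul_eq_frob_mul, Function.iterate_succ_apply', Function.iterate_succ_apply']
    have hpow : (dr.δ^[n] y) ^ p * dr.δ (dr.frob^[n] x) ∈ dr.iterateSpan y (n + 1) :=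
      Ideal.mul_mem_right _ _
        (Ideal.pow_mem_of_mem _ (dr.iterate_mem_iterateSpan y n.lt_succ_self) p hp)
    convert (Ideal.add_mem _ (dr.iterateSpan_mono y n.le_succ (dr.delta_add_sub_mem a ih))
      (Ideal.add_mem _ hpow (dr.delta_mem_iterateSpan_succ hp y ih))) using 1
    rw [hsplit, hδa]
    ring

end DeltaRing

theorem stmt4_general {p : ℕ} [Fact p.Prime] {R : Type*} [CommRing R] (dr : DeltaRing p R)
    (x y : R) (k : ℕ) (hxy : x * y = (p : R) ^ k)
    (i : ℕ) :
    dr.δ^[i] ((p : R) ^ k) ∈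
      Ideal.span ({(fun a => a ^ p + (p : R) * dr.δ a)^[i] x * dr.δ^[i] y} ∪
        (fun j => dr.δ^[j] y) '' Set.Iio i) := by
  have h := dr.iterate_delta_mul_sub_mem (Fact.out : p.Prime).pos x y i
  rw [hxy] at h
  rw [Set.singleton_union, Ideal.mem_span_insert]
  exact ⟨1, _, h, by rw [one_mul]; exact (add_sub_cancel _ _).symm⟩

/-- If `x * y = p^k` in a δ-ring, then for every `i ≥ 1`,
`δ^i(p^k) ∈ (φ^i(x) δ^i(y), δ^{i-1}(y), …, δ(y), y)`. -/
theorem stmt4 {p : ℕ} [Fact p.Prime] {R : Type*} [CommRing R] (dr : DeltaRing p R)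
    (x y : R) (k : ℕ) (hk : 1 ≤ k) (hxy : x * y = (p : R) ^ k)
    (i : ℕ) (hi : 1 ≤ i) :
    dr.δ^[i] ((p : R) ^ k) ∈
      Ideal.span ({(fun a => a ^ p + (p : R) * dr.δ a)^[i] x * dr.δ^[i] y} ∪
        (fun j => dr.δ^[j] y) '' Set.Iio i) :=
  stmt4_general dr x y k hxy i
end

section
/- Let R be a δ-ring which is (p, x)-adically complete with xy = p^k for some y ∈ R and k ≥ 1. Then x is p-adically nilpotent: the p-adic completion of R[1/x] is the zero ring. -/
/-!
Since `p` and `x` lie in the Jacobson radical, `δ^[k] (x * y) = δ^[k] (p ^ k)` is a unit: each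
application of `δ` trades one factor `p` for a unit factor. On the other hand, let `T i` consist of
the `a` with `w * a ∈ (p ^ i)` for some `w ≡ x ^ n (mod p)`. As `φ a = a ^ p + p * δ a` preserves
these `w`, `δ` maps `T (i + 1)` into `T i`, and starting from `y ∈ T k` the defect
`δ^[j] (x * y) - φ^[j] x * δ^[j] y` stays in `T (k - j + 1)`. At `j = k` the unit `δ^[k] (x * y)`
differs from `φ^[k] x * δ^[k] y ∈ (p, x)` by an element of `T 1`, so `T 1` contains a unit: some
`w ≡ x ^ n` lies in `(p)`, whence `x ^ n ∈ (p)` and `p` is invertible in `R[1/x]`.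
-/

section

variable {R : Type*} [CommRing R]

theorem IsUnit.add_of_mem_jacobson_bot {u z : R} (hu : IsUnit u)
    (hz : z ∈ (⊥ : Ideal R).jacobson) : IsUnit (u + z) := by
  obtain ⟨u, rfl⟩ := hu
  have h : IsUnit (z * ↑u⁻¹ + 1) := Ideal.mem_jacobson_bot.mp hz _
  convert h.mul u.isUnit using 1
  rw [add_mul, mul_assoc, Units.inv_mul, mul_one, one_mul, add_comm]

theorem isUnit_algebraMap_of_pow_mem_span {a x : R} {n : ℕ} (h : x ^ n ∈ Ideal.span {a}) :
    IsUnit (algebraMap R (Localization.Away x) a) := by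
  obtain ⟨c, hc⟩ := Ideal.mem_span_singleton'.mp h
  have hx : IsUnit (algebraMap R (Localization.Away x) (x ^ n)) := by
    rw [map_pow]; exact (IsLocalization.Away.algebraMap_isUnit x).pow n
  rw [← hc, map_mul] at hx
  exact isUnit_of_mul_isUnit_right hx

def Submonoid.powersModulo (I : Ideal R) (x : R) : Submonoid R :=
  (Submonoid.powers (Ideal.Quotient.mk I x)).comap (Ideal.Quotient.mk I)

theorem Submonoid.mem_powersModulo {I : Ideal R} {x w : R} :
    w ∈ Submonoid.powersModulo I x ↔ ∃ n, Ideal.Quotient.mk I x ^ n = Ideal.Quotient.mk I w :=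
  Submonoid.mem_powers_iff _ _

theorem Submonoid.self_mem_powersModulo (I : Ideal R) (x : R) :
    x ∈ Submonoid.powersModulo I x :=
  Submonoid.mem_powersModulo.mpr ⟨1, pow_one _⟩

def Ideal.saturation (M : Submonoid R) (I : Ideal R) : Ideal R :=
  (I.map (algebraMap R (Localization M))).comap (algebraMap R (Localization M))

namespace Ideal.saturation

variable {M : Submonoid R} {I J : Ideal R}

theorem mem_iff {a : R} : a ∈ I.saturation M ↔ ∃ m ∈ M, m * a ∈ I :=
  IsLocalization.algebraMap_mem_map_algebraMap_iff M _ I a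

theorem le_self : I ≤ I.saturation M := Ideal.le_comap_map

theorem mono (h : I ≤ J) : I.saturation M ≤ J.saturation M :=
  Ideal.comap_mono (Ideal.map_mono h)

theorem mul_mem_iff {m a : R} (hm : m ∈ M) : m * a ∈ I.saturation M ↔ a ∈ I.saturation M := by
  simp only [Ideal.saturation, Ideal.mem_comap, map_mul]
  exact Ideal.unit_mul_mem_iff_mem _ (IsLocalization.map_units _ ⟨m, hm⟩)

end Ideal.saturation

end

namespace DeltaRing

variable {p : ℕ} {R : Type*} [CommRing R] (dr : DeltaRing p R)

theorem delta_add_sub_mem_span (a t : R) :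
    dr.δ (a + t) - dr.δ a - dr.δ t ∈ Ideal.span {t} := by
  have h : dr.δ (a + t) - dr.δ a - dr.δ t =
      -∑ i ∈ Finset.Ioo 0 p, ((p.choose i / p : ℕ) : R) * a ^ i * t ^ (p - i) := by
    rw [dr.delta_add]; ring
  rw [h, Ideal.mem_span_singleton, dvd_neg]
  refine Finset.dvd_sum fun i hi => Dvd.dvd.mul_left (dvd_pow_self t ?_) _
  have := (Finset.mem_Ioo.mp hi).2
  omega

theorem iterate_delta_mem {T : ℕ → Ideal R} (hδ : ∀ i, ∀ a ∈ T (i + 1), dr.δ a ∈ T i)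
    {i j : ℕ} {a : R} (ha : a ∈ T (i + j)) : dr.δ^[j] a ∈ T i := by
  induction j generalizing a with
  | zero => exact ha
  | succ j ih => exact ih (hδ _ _ ha)

/-- Everything congruent to a power of `x` modulo `p` becomes a unit in the `p`-adic completion
`R'` of `R[1/x]`, so `chain p x i` is an algebraic stand-in for the contraction of `p ^ i R'`. -/
abbrev chain (p : ℕ) (x : R) (i : ℕ) : Ideal R :=
  (Ideal.span {(p : R) ^ i}).saturation (Submonoid.powersModulo (Ideal.span {(p : R)}) x)

theorem chain_antitone (x : R) : Antitone (chain p x) :=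
  antitone_nat_of_succ_le fun i => Ideal.saturation.mono
    (Ideal.span_singleton_le_span_singleton.mpr (pow_dvd_pow _ i.le_succ))

variable [hp : Fact p.Prime]

def phi : R →+* R where
  toFun a := a ^ p + p * dr.δ a
  map_one' := by simp [dr.delta_one]
  map_mul' a b := by simp only [dr.delta_mul]; ring
  map_zero' := by simp [dr.delta_zero, hp.out.ne_zero]
  map_add' a b := by
    have hsum : ∑ i ∈ Finset.Ioo 0 p, a ^ i * b ^ (p - i) * ((p.choose i / p : ℕ) : R) =
        ∑ i ∈ Finset.Ioo 0 p, ((p.choose i / p : ℕ) : R) * a ^ i * b ^ (p - i) :=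
      Finset.sum_congr rfl fun _ _ => by ring
    rw [dr.delta_add, add_pow_prime_eq' hp.out, hsum]
    ring

theorem phi_apply (a : R) : dr.phi a = a ^ p + p * dr.δ a := rfl

theorem delta_mul_eq (a b : R) : dr.δ (a * b) = dr.phi a * dr.δ b + b ^ p * dr.δ a := by
  rw [dr.delta_mul, phi_apply]; ring

theorem delta_natCast (n : ℕ) : dr.δ n = (((n - n ^ p : ℤ) / p : ℤ) : R) := by
  induction n with
  | zero => simp [dr.delta_zero, hp.out.ne_zero]
  | succ n ih =>
    have hsucc := add_pow_prime_eq' hp.out (n : ℤ) 1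
    simp only [one_pow, mul_one] at hsucc
    have hnum : ((n + 1 : ℕ) - (n + 1 : ℕ) ^ p : ℤ) = (n - n ^ p : ℤ) +
        (-∑ i ∈ Finset.Ioo 0 p, (n : ℤ) ^ i * ((p.choose i / p : ℕ) : ℤ)) * p := by
      simp only [Nat.cast_add, Nat.cast_one]; rw [hsucc]; ring
    rw [hnum, Int.add_mul_ediv_right _ _ (by exact_mod_cast hp.out.ne_zero), Nat.cast_succ,
      dr.delta_add, dr.delta_one, ih]
    simp only [one_pow, mul_one, Int.cast_add, Int.cast_neg, Int.cast_sum, Int.cast_mul,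
      Int.cast_pow, Int.cast_natCast]
    rw [← sub_eq_add_neg, add_zero]
    congr 1
    exact Finset.sum_congr rfl fun _ _ => mul_comm _ _

theorem delta_p_pow_succ (m : ℕ) :
    dr.δ ((p : R) ^ (m + 1)) = (p : R) ^ m * (1 - (p : R) ^ ((m + 1) * (p - 1))) := by
  have hexp : (m + 1) * p = (m + 1) + (m + 1) * (p - 1) := by
    have := hp.out.one_le
    zify [this]
    ring
  have hint : (((p ^ (m + 1) : ℕ) - (p ^ (m + 1) : ℕ) ^ p : ℤ) / p : ℤ) =
      (p : ℤ) ^ m * (1 - (p : ℤ) ^ ((m + 1) * (p - 1))) := by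
    have hnum : ((p ^ (m + 1) : ℕ) - (p ^ (m + 1) : ℕ) ^ p : ℤ) =
        (p : ℤ) ^ m * (1 - (p : ℤ) ^ ((m + 1) * (p - 1))) * p := by
      simp only [Nat.cast_pow]
      rw [← pow_mul, hexp, pow_add, pow_succ]
      ring
    rw [hnum, Int.mul_ediv_cancel _ (by exact_mod_cast hp.out.ne_zero)]
  rw [← Nat.cast_pow, delta_natCast, hint]
  push_cast
  rfl

theorem phi_natCast_pow (m : ℕ) : dr.phi ((p : R) ^ m) = (p : R) ^ m := by
  rw [map_pow, map_natCast]

theorem delta_p_pow_succ_mul_eq (m : ℕ) (u : R) :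
    dr.δ ((p : R) ^ (m + 1) * u) =
      (p : R) ^ m * (u ^ p * (1 - (p : R) ^ ((m + 1) * (p - 1))) + p * dr.δ u) := by
  rw [delta_mul_eq, phi_natCast_pow, delta_p_pow_succ]
  ring

theorem isUnit_iterate_delta_p_pow_mul (hjac : (p : R) ∈ (⊥ : Ideal R).jacobson) (m : ℕ) {u : R}
    (hu : IsUnit u) : IsUnit (dr.δ^[m] ((p : R) ^ m * u)) := by
  induction m generalizing u with
  | zero => simpa using hu
  | succ m ih =>
    have hpow : (p : R) ^ ((m + 1) * (p - 1)) ∈ (⊥ : Ideal R).jacobson :=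
      Ideal.pow_mem_of_mem _ hjac _ (Nat.mul_pos m.succ_pos (Nat.sub_pos_of_lt hp.out.one_lt))
    have hu' : IsUnit (u ^ p * (1 - (p : R) ^ ((m + 1) * (p - 1))) + p * dr.δ u) := by
      have h := (hu.pow p).add_of_mem_jacobson_bot
        (sub_mem (Ideal.mul_mem_left _ (dr.δ u) hjac) (Ideal.mul_mem_left _ (u ^ p) hpow))
      convert h using 1
      ring
    rw [Function.iterate_succ_apply, delta_p_pow_succ_mul_eq]
    exact ih hu'

theorem delta_mem_span_p_pow {m : ℕ} {b : R} (hb : b ∈ Ideal.span {(p : R) ^ (m + 1)}) :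
    dr.δ b ∈ Ideal.span {(p : R) ^ m} := by
  obtain ⟨c, rfl⟩ := Ideal.mem_span_singleton'.mp hb
  rw [mul_comm, delta_p_pow_succ_mul_eq]
  exact Ideal.mul_mem_right _ _ (Ideal.mem_span_singleton_self _)

theorem mk_phi (a : R) :
    Ideal.Quotient.mk (Ideal.span {(p : R)}) (dr.phi a) =
      Ideal.Quotient.mk (Ideal.span {(p : R)}) a ^ p := by
  rw [phi_apply, map_add, map_mul, map_pow,
    Ideal.Quotient.eq_zero_iff_mem.mpr (Ideal.mem_span_singleton_self _), zero_mul, add_zero]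

theorem mk_iterate_phi (a : R) (j : ℕ) :
    Ideal.Quotient.mk (Ideal.span {(p : R)}) (dr.phi^[j] a) =
      Ideal.Quotient.mk (Ideal.span {(p : R)}) a ^ p ^ j := by
  induction j with
  | zero => simp
  | succ j ih => rw [Function.iterate_succ_apply', mk_phi, ih, ← pow_mul, pow_succ]

theorem iterate_phi_mem_span_pair (x : R) (j : ℕ) :
    dr.phi^[j] x ∈ Ideal.span {(p : R), x} := by
  have hmod : dr.phi^[j] x - x ^ p ^ j ∈ Ideal.span {(p : R)} := by
    rw [← Ideal.Quotient.eq, mk_iterate_phi, map_pow]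
  have hle : Ideal.span {(p : R)} ≤ Ideal.span {(p : R), x} :=
    Ideal.span_mono (Set.singleton_subset_iff.mpr (Set.mem_insert _ _))
  rw [← sub_add_cancel (dr.phi^[j] x) (x ^ p ^ j)]
  exact add_mem (hle hmod) (Ideal.pow_mem_of_mem _ (Ideal.subset_span (by simp)) _
    (pow_pos hp.out.pos j))

theorem phi_mem_powersModulo {x w : R}
    (hw : w ∈ Submonoid.powersModulo (Ideal.span {(p : R)}) x) :
    dr.phi w ∈ Submonoid.powersModulo (Ideal.span {(p : R)}) x := by
  obtain ⟨n, hn⟩ := Submonoid.mem_powersModulo.mp hw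
  exact Submonoid.mem_powersModulo.mpr ⟨n * p, by rw [mk_phi, ← hn, pow_mul]⟩

theorem iterate_delta_mul_sub_mem_s6 {T : ℕ → Ideal R} (hT : Antitone T)
    (hδ : ∀ i, ∀ a ∈ T (i + 1), dr.δ a ∈ T i) (a : R) {i j : ℕ} {b : R} (hb : b ∈ T (i + j)) :
    dr.δ^[j] (a * b) - dr.phi^[j] a * dr.δ^[j] b ∈ T (i + 1) := by
  induction j generalizing i with
  | zero => simp
  | succ j ih =>
    rw [← add_assoc, add_right_comm] at hb
    set A := dr.phi^[j] a * dr.δ^[j] b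
    set t := dr.δ^[j] (a * b) - A
    have ht : t ∈ T (i + 1 + 1) := ih hb
    have hδb : dr.δ^[j] b ∈ T (i + 1) := dr.iterate_delta_mem hδ hb
    have hsum : dr.δ (A + t) - dr.δ A - dr.δ t ∈ T (i + 1) :=
      (Ideal.span_singleton_le_iff_mem _).mpr (hT (Nat.le_succ _) ht)
        (dr.delta_add_sub_mem_span A t)
    have hA : dr.δ A - dr.phi (dr.phi^[j] a) * dr.δ (dr.δ^[j] b) ∈ T (i + 1) := by
      rw [delta_mul_eq, add_sub_cancel_left]
      exact Ideal.mul_mem_right _ _ (Ideal.pow_mem_of_mem _ hδb _ hp.out.pos)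
    simp only [Function.iterate_succ_apply']
    rw [show dr.δ^[j] (a * b) = A + t by ring]
    convert add_mem (add_mem hsum (hδ _ _ ht)) hA using 1
    ring

theorem delta_mem_chain (x : R) {i : ℕ} {a : R} (ha : a ∈ chain p x (i + 1)) :
    dr.δ a ∈ chain p x i := by
  obtain ⟨w, hw, hwa⟩ := Ideal.saturation.mem_iff.mp ha
  have hδwa : dr.δ (w * a) ∈ chain p x i :=
    Ideal.saturation.le_self (dr.delta_mem_span_p_pow hwa)
  have hapδw : a ^ p * dr.δ w ∈ chain p x i := Ideal.mul_mem_right _ _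
    (Ideal.pow_mem_of_mem _ (chain_antitone x i.le_succ ha) _ hp.out.pos)
  rw [← Ideal.saturation.mul_mem_iff (dr.phi_mem_powersModulo hw)]
  rw [delta_mul_eq] at hδwa
  simpa using sub_mem hδwa hapδw

theorem exists_pow_mem_span_of_mul_eq_p_pow (dr : DeltaRing p R) (x : R)
    (hjac : Ideal.span {(p : R), x} ≤ (⊥ : Ideal R).jacobson) {y : R} {k : ℕ}
    (hxy : x * y = (p : R) ^ k) : ∃ n, x ^ n ∈ Ideal.span {(p : R)} := by
  have hy : y ∈ chain p x (0 + k) := by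
    rw [zero_add, ← Ideal.saturation.mul_mem_iff (Submonoid.self_mem_powersModulo _ x), hxy]
    exact Ideal.saturation.le_self (Ideal.mem_span_singleton_self _)
  have hdefect :=
    dr.iterate_delta_mul_sub_mem_s6 (chain_antitone x) (fun _ _ => dr.delta_mem_chain x) x hy
  have hv : IsUnit (dr.δ^[k] (x * y)) := by
    simpa [hxy] using dr.isUnit_iterate_delta_p_pow_mul (hjac (Ideal.subset_span (by simp))) k
      isUnit_one
  have hφ : dr.phi^[k] x * dr.δ^[k] y ∈ (⊥ : Ideal R).jacobson :=
    hjac (Ideal.mul_mem_right _ _ (dr.iterate_phi_mem_span_pair x k))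
  have htop := Ideal.eq_top_of_isUnit_mem _ hdefect
    (by simpa [sub_eq_add_neg] using hv.add_of_mem_jacobson_bot (neg_mem hφ))
  obtain ⟨w, hw, hwp⟩ := Ideal.saturation.mem_iff.mp (htop ▸ Submodule.mem_top : (1 : R) ∈ _)
  obtain ⟨n, hn⟩ := Submonoid.mem_powersModulo.mp hw
  refine ⟨n, Ideal.Quotient.eq_zero_iff_mem.mp ?_⟩
  rw [map_pow, hn, Ideal.Quotient.eq_zero_iff_mem]
  simpa using hwp

end DeltaRing

theorem stmt6_general {p : ℕ} [Fact p.Prime] {R : Type*} [CommRing R] (dr : DeltaRing p R)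
    (x y : R) (k : ℕ) (hxy : x * y = (p : R) ^ k)
    (hc : IsAdicComplete (Ideal.span {(p : R), x}) R) :
    Subsingleton
      (AdicCompletion (Ideal.span {(p : Localization.Away x)}) (Localization.Away x)) := by
  obtain ⟨n, hn⟩ :=
    dr.exists_pow_mem_span_of_mul_eq_p_pow x (IsAdicComplete.le_jacobson_bot _) hxy
  have hunit : IsUnit (p : Localization.Away x) := by
    simpa using isUnit_algebraMap_of_pow_mem_span hn
  rw [Ideal.span_singleton_eq_top.mpr hunit]
  exact IsHausdorff.subsingleton (R := Localization.Away x) inferInstance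

/-- If `R` is a `(p,x)`-adically complete δ-ring and `x * y = p^k` with `k ≥ 1`,
then `x` is `p`-adically nilpotent: the `p`-adic completion of `R[1/x]` is the
zero ring. -/
theorem stmt6 {p : ℕ} [Fact p.Prime] {R : Type*} [CommRing R] (dr : DeltaRing p R)
    (x y : R) (k : ℕ) (hk : 1 ≤ k) (hxy : x * y = (p : R) ^ k)
    (hc : IsAdicComplete (Ideal.span {(p : R), x}) R) :
    Subsingleton
      (AdicCompletion (Ideal.span {(p : Localization.Away x)}) (Localization.Away x)) :=
  stmt6_general dr x y k hxy hc
end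

section
/- Let M be an abelian group annihilated by a power of p, with an automorphism σ such that every element is fixed by σ^{p^N} for some N. Then the colimit over N of the coinvariants/first group cohomology H^1(⟨σ^{p^N}⟩, M) = M/(σ^{p^N}-1)M, with transition maps induced by the norm maps, is zero; equivalently, in the colimit system where the bonding maps eventually become multiplication by p, the colimit vanishes. -/
/-!
Fix `N` and `m`, and pick `N₀ ≥ N` with `σ^{p^{N₀}} m = m`. The summands `σ^{j p^N} m` of the
norm are then periodic in `j` with period `p^{N₀ - N}`, so at stage `N₀ + r` the norm of `m` is
`p^r` times the sum over one period, which is `0`.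
-/

open Finset

theorem Function.Periodic.sum_range_mul {M : Type*} [AddCommMonoid M] {f : ℕ → M} {c : ℕ}
    (hf : Function.Periodic f c) (k : ℕ) :
    ∑ j ∈ range (k * c), f j = k • ∑ j ∈ range c, f j := by
  induction k with
  | zero => simp
  | succ k ih =>
    rw [add_mul, one_mul, sum_range_add, ih, succ_nsmul]
    congr 1
    refine sum_congr rfl fun j _ => ?_
    rw [add_comm]
    exact hf.nat_mul k j

namespace AddAut

variable {M : Type*} [Add M] {σ : AddAut M} {m : M}

theorem nsmul_apply_of_apply_eq_self (h : σ m = m) (k : ℕ) : (k • σ) m = m := by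
  induction k with
  | zero => rfl
  | succ k ih => rw [succ_nsmul, add_apply, h, ih]

theorem mul_nsmul_apply_of_nsmul_apply_eq_self {n : ℕ} (h : (n • σ) m = m) (k : ℕ) :
    ((k * n) • σ) m = m := by
  rw [mul_comm, mul_nsmul]
  exact nsmul_apply_of_apply_eq_self h k

theorem periodic_mul_nsmul_apply {c d : ℕ} (h : ((c * d) • σ) m = m) :
    Function.Periodic (fun j : ℕ => ((j * d) • σ) m) c := by
  intro j
  simp only [add_mul, add_nsmul, add_apply, h]

end AddAut

theorem stmt14_general (p : ℕ) (M : Type*) [AddCommGroup M]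
    (r : ℕ) (htor : ∀ m : M, p ^ r • m = 0)
    (σ : AddAut M) (hcont : ∀ m : M, ∃ N : ℕ, ((p ^ N) • σ) m = m) :
    ∀ N : ℕ, ∀ m : M, ∃ N', N ≤ N' ∧
      ∃ z : M, (∑ j ∈ Finset.range (p ^ (N' - N)), ((j * p ^ N) • σ) m)
        = ((p ^ N') • σ) z - z := by
  intro N m
  obtain ⟨N₁, hN₁⟩ := hcont m
  set N₀ := max N N₁
  have hfix : ((p ^ (N₀ - N) * p ^ N) • σ) m = m := by
    have hsplit : p ^ (N₀ - N) * p ^ N = p ^ (N₀ - N₁) * p ^ N₁ := by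
      rw [← pow_add, ← pow_add]; congr 1; omega
    rw [hsplit]
    exact AddAut.mul_nsmul_apply_of_nsmul_apply_eq_self hN₁ _
  refine ⟨N₀ + r, by omega, 0, ?_⟩
  have hexp : p ^ (N₀ + r - N) = p ^ r * p ^ (N₀ - N) := by
    rw [← pow_add]; congr 1; omega
  rw [hexp, (AddAut.periodic_mul_nsmul_apply hfix).sum_range_mul, htor]
  simp

/-- Let `M` be an abelian group annihilated by a power of `p`, with an
automorphism `σ` such that every element is fixed by `σ^{p^N}` for some `N`.
Then the colimit over `N` of `H^1(⟨σ^{p^N}⟩, M) = M/(σ^{p^N}-1)M`, with the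
norm transition maps `x ↦ ∑_{j < p^{N'-N}} σ^{j p^N} x`, vanishes: every class
becomes trivial at some later stage. -/
theorem stmt14 (p : ℕ) [Fact p.Prime] (M : Type*) [AddCommGroup M]
    (r : ℕ) (htor : ∀ m : M, p ^ r • m = 0)
    (σ : AddAut M) (hcont : ∀ m : M, ∃ N : ℕ, ((p ^ N) • σ) m = m) :
    ∀ N : ℕ, ∀ m : M, ∃ N', N ≤ N' ∧
      ∃ z : M, (∑ j ∈ Finset.range (p ^ (N' - N)), ((j * p ^ N) • σ) m)
        = ((p ^ N') • σ) z - z :=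
  stmt14_general p M r htor σ hcont
end
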